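/- For the Young function Q(u) = u log^r(1+u) with integer r ≥ 1, and the normalized indicator g = 1_E/(2γ)^r where E ⊂ T^d has measure proportional to γ^r, one has ∫ Q(|g|) ≲ γ^r Q(1/(2γ)^r); consequently for γ = γ_n = π/(6(2^{2n}+1/2)) the Luxemburg norm satisfies ‖1_{[0,γ_n]^r × T^{d−r}}/(2γ_n)^r‖_{L_Q(T^d)} ≲ Q(2^{2nr})/2^{2nr} whenever Q(2^{2nr}) ≳ 2^{2nr}. -/

import Mathlib

/-! On the corner `[0, γ]^r × T^{d-r}` the test function is the constant `c = (2γ)^{-r}`, so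
`∫ Q(|g|) = |corner ∩ T^d| · Q(c) ≤ (2π)^d γ^r Q(c)`.
Since `Q(u / k) ≤ Q(u) / k` for `k ≥ 1`, the level `k = 1 + ∫ Q(|f|)` is admissible in the
Luxemburg infimum, so `‖f‖_{L_Q} ≤ 1 + ∫ Q(|f|)`. At `γ = γ_n` one has `c ≤ 2^r N` with
`N = 2^{2nr}`, hence `γ^r Q(c) = 2^{-r} log^r (1 + c) ≤ (r + 1)^r log^r (1 + N) = (r + 1)^r Q(N) / N`,
and the hypothesis `Q(N) ≥ N` absorbs the additive `1`. -/

noncomputable section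
open MeasureTheory Real Filter Set

/-- The cube T^d = [-π, π)^d. -/
def box (d : ℕ) : Set (Fin d → ℝ) := Set.univ.pi fun _ => Set.Ico (-Real.pi) Real.pi

/-- Luxemburg norm of f in L_Q(T^d). -/
def luxNorm (d : ℕ) (Q : ℝ → ℝ) (f : (Fin d → ℝ) → ℝ) : ℝ :=
  sInf {k : ℝ | 0 < k ∧ (∫ x in box d, Q (|f x| / k)) ≤ 1}

def gam (n : ℕ) : ℝ := Real.pi / (6 * ((2 : ℝ) ^ (2 * n) + 1 / 2))

/-- The normalized indicator 1_{[0,γ]^r × T^{d−r}} / (2γ)^r. -/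
def testFun (d r : ℕ) (γ : ℝ) : (Fin d → ℝ) → ℝ :=
  ({x | ∀ i : Fin d, (i : ℕ) < r → x i ∈ Set.Icc 0 γ}).indicator
    fun _ => 1 / (2 * γ) ^ r

def youngLogPow (r : ℕ) (u : ℝ) : ℝ := u * Real.log (1 + u) ^ r

lemma youngLogPow_zero (r : ℕ) : youngLogPow r 0 = 0 := zero_mul _

lemma youngLogPow_nonneg (r : ℕ) {u : ℝ} (hu : 0 ≤ u) : 0 ≤ youngLogPow r u :=
  mul_nonneg hu (pow_nonneg (Real.log_nonneg (by linarith)) r)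

lemma youngLogPow_div_le (r : ℕ) {u : ℝ} (hu : 0 ≤ u) {k : ℝ} (hk : 1 ≤ k) :
    youngLogPow r (u / k) ≤ youngLogPow r u / k := by
  have huk : 0 ≤ u / k := div_nonneg hu (zero_le_one.trans hk)
  rw [youngLogPow, youngLogPow, div_mul_eq_mul_div]
  gcongr
  · exact Real.log_nonneg (by linarith)
  · exact div_le_self hu hk

lemma luxNorm_le_one_add_integral {d : ℕ} {Q : ℝ → ℝ} {f : (Fin d → ℝ) → ℝ}
    (hQ_nonneg : ∀ u, 0 ≤ u → 0 ≤ Q u)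
    (hQ_div : ∀ u, 0 ≤ u → ∀ k, 1 ≤ k → Q (u / k) ≤ Q u / k)
    (hf : IntegrableOn (fun x => Q |f x|) (box d)) :
    luxNorm d Q f ≤ 1 + ∫ x in box d, Q |f x| := by
  set I := ∫ x in box d, Q |f x|
  have hI : 0 ≤ I := integral_nonneg fun x => hQ_nonneg _ (abs_nonneg _)
  refine csInf_le ⟨0, fun k hk => hk.1.le⟩ ⟨by positivity, ?_⟩
  calc (∫ x in box d, Q (|f x| / (1 + I)))
      ≤ ∫ x in box d, Q |f x| / (1 + I) :=
        integral_mono_of_nonneg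
          (Eventually.of_forall fun x => hQ_nonneg _ (by positivity))
          (hf.div_const _)
          (Eventually.of_forall fun x => hQ_div _ (abs_nonneg _) _ (by linarith))
    _ = I / (1 + I) := integral_div _ _
    _ ≤ 1 := (div_le_one (by positivity)).2 (by linarith)

lemma volume_box_lt_top (d : ℕ) : volume (box d) < ⊤ := by
  rw [box, Real.volume_pi_Ico]
  exact ENNReal.prod_lt_top fun _ _ => ENNReal.ofReal_lt_top

def corner (d r : ℕ) (γ : ℝ) : Set (Fin d → ℝ) :=
  {x | ∀ i : Fin d, (i : ℕ) < r → x i ∈ Set.Icc 0 γ}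

lemma testFun_eq_indicator (d r : ℕ) (γ : ℝ) :
    testFun d r γ = (corner d r γ).indicator fun _ => 1 / (2 * γ) ^ r := rfl

lemma measurableSet_corner (d r : ℕ) (γ : ℝ) : MeasurableSet (corner d r γ) := by
  simp only [corner, ofPred_forall]
  exact .iInter fun i => .iInter fun _ => measurableSet_Icc.preimage (measurable_pi_apply i)

lemma volume_box_inter_corner_le {d r : ℕ} (hrd : r ≤ d) {γ : ℝ} (hγ : 0 ≤ γ) :
    volume (box d ∩ corner d r γ) ≤ ENNReal.ofReal (γ ^ r * (2 * π) ^ d) := by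
  have hsub : box d ∩ corner d r γ ⊆
      univ.pi fun i : Fin d => if (i : ℕ) < r then Icc 0 γ else Ico (-π) π := by
    rintro x ⟨hx_box, hx_corner⟩ i -
    dsimp only
    split_ifs with hi
    · exact hx_corner i hi
    · exact hx_box i (mem_univ i)
  have h2π : 1 ≤ ENNReal.ofReal (2 * π) := by
    rw [← ENNReal.ofReal_one]; exact ENNReal.ofReal_le_ofReal (by linarith [pi_gt_three])
  calc volume (box d ∩ corner d r γ)
      ≤ ∏ i : Fin d, if (i : ℕ) < r then ENNReal.ofReal γ else ENNReal.ofReal (2 * π) := by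
        refine (measure_mono hsub).trans_eq ?_
        rw [volume_pi_pi]
        refine Finset.prod_congr rfl fun i _ => ?_
        split_ifs
        · simp [Real.volume_Icc]
        · rw [Real.volume_Ico]; ring_nf
    _ = ENNReal.ofReal γ ^ r * ENNReal.ofReal (2 * π) ^ (Finset.univ.filter
          fun i : Fin d => ¬ (i : ℕ) < r).card := by
        rw [Finset.prod_ite, Finset.prod_const, Finset.prod_const, Fin.card_filter_val_lt,
          min_eq_right hrd]
    _ ≤ ENNReal.ofReal γ ^ r * ENNReal.ofReal (2 * π) ^ d := by
        gcongr
        exact (Finset.card_le_univ _).trans_eq (Fintype.card_fin d)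
    _ = ENNReal.ofReal (γ ^ r * (2 * π) ^ d) := by
        rw [← ENNReal.ofReal_pow hγ, ← ENNReal.ofReal_pow (by positivity),
          ← ENNReal.ofReal_mul (by positivity)]

lemma comp_abs_testFun_eq_indicator {Q : ℝ → ℝ} (hQ : Q 0 = 0) (d r : ℕ) (γ : ℝ) :
    (fun x => Q |testFun d r γ x|) = (corner d r γ).indicator fun _ => Q |1 / (2 * γ) ^ r| :=
  (Set.indicator_comp_of_zero (g := fun u => Q |u|) (by simp [hQ])).symm

lemma integral_comp_abs_testFun {Q : ℝ → ℝ} (hQ : Q 0 = 0) (d r : ℕ) (γ : ℝ) :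
    ∫ x in box d, Q |testFun d r γ x|
      = volume.real (corner d r γ ∩ box d) * Q |1 / (2 * γ) ^ r| := by
  rw [comp_abs_testFun_eq_indicator hQ, integral_indicator_const _ (measurableSet_corner d r γ),
    measureReal_restrict_apply (measurableSet_corner d r γ), smul_eq_mul]

lemma integrableOn_comp_abs_testFun {Q : ℝ → ℝ} (hQ : Q 0 = 0) (d r : ℕ) (γ : ℝ) :
    IntegrableOn (fun x => Q |testFun d r γ x|) (box d) := by
  rw [comp_abs_testFun_eq_indicator hQ]
  have : IsFiniteMeasure (volume.restrict (box d)) :=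
    isFiniteMeasure_restrict.2 (volume_box_lt_top d).ne
  exact (integrable_const _).indicator (measurableSet_corner d r γ)

lemma integral_youngLogPow_testFun_le {d r : ℕ} (hrd : r ≤ d) {γ : ℝ} (hγ : 0 ≤ γ) :
    ∫ x in box d, youngLogPow r |testFun d r γ x|
      ≤ (2 * π) ^ d * γ ^ r * youngLogPow r (1 / (2 * γ) ^ r) := by
  rw [integral_comp_abs_testFun (youngLogPow_zero r), abs_of_nonneg (by positivity),
    inter_comm]
  have hvol : volume.real (box d ∩ corner d r γ) ≤ γ ^ r * (2 * π) ^ d :=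
    ENNReal.toReal_le_of_le_ofReal (by positivity) (volume_box_inter_corner_le hrd hγ)
  calc _ ≤ γ ^ r * (2 * π) ^ d * youngLogPow r (1 / (2 * γ) ^ r) := by
        gcongr
        exact youngLogPow_nonneg r (by positivity)
    _ = _ := by ring

lemma gam_pos (n : ℕ) : 0 < gam n := by
  unfold gam; positivity

lemma one_div_two_mul_gam_le (n : ℕ) : 1 / (2 * gam n) ≤ 2 * 2 ^ (2 * n) := by
  have hM : (1 : ℝ) ≤ 2 ^ (2 * n) := one_le_pow₀ one_le_two
  rw [gam, div_le_iff₀ (by positivity)]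
  field_simp
  nlinarith [pi_gt_three]

lemma log_one_add_one_div_two_mul_gam_pow_le (n r : ℕ) :
    Real.log (1 + 1 / (2 * gam n) ^ r) ≤ (r + 1) * Real.log (1 + 2 ^ (2 * n * r)) := by
  set N : ℝ := 2 ^ (2 * n * r)
  have hN : 1 ≤ N := one_le_pow₀ one_le_two
  have h2r : (1 : ℝ) ≤ 2 ^ r := one_le_pow₀ one_le_two
  have hle : 1 + 1 / (2 * gam n) ^ r ≤ (1 + N) ^ (r + 1) :=
    calc 1 + 1 / (2 * gam n) ^ r
        = 1 + (1 / (2 * gam n)) ^ r := by rw [one_div_pow]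
      _ ≤ 1 + (2 * 2 ^ (2 * n)) ^ r := by
          gcongr
          · exact (one_div_pos.2 (by linarith [gam_pos n])).le
          · exact one_div_two_mul_gam_le n
      _ = 1 + 2 ^ r * N := by rw [mul_pow, ← pow_mul]
      _ ≤ 2 ^ r * (1 + N) := by nlinarith
      _ ≤ (1 + N) ^ r * (1 + N) := by gcongr; linarith
      _ = (1 + N) ^ (r + 1) := (pow_succ _ _).symm
  have hγ := gam_pos n
  calc Real.log (1 + 1 / (2 * gam n) ^ r)
      ≤ Real.log ((1 + N) ^ (r + 1)) := Real.log_le_log (by positivity) hle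
    _ = (r + 1) * Real.log (1 + N) := by rw [Real.log_pow]; push_cast; ring

lemma gam_pow_mul_youngLogPow_le (n r : ℕ) :
    gam n ^ r * youngLogPow r (1 / (2 * gam n) ^ r)
      ≤ (r + 1) ^ r * Real.log (1 + 2 ^ (2 * n * r)) ^ r := by
  set γ := gam n
  have hγ : 0 < γ := gam_pos n
  have hlog : 0 ≤ Real.log (1 + 1 / (2 * γ) ^ r) := Real.log_nonneg (le_add_of_nonneg_right (by positivity))
  have hγc : γ ^ r * (1 / (2 * γ) ^ r) = (1 / 2) ^ r := by
    rw [mul_pow, one_div_pow (2 : ℝ)]; field_simp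
  calc γ ^ r * youngLogPow r (1 / (2 * γ) ^ r)
      = (1 / 2) ^ r * Real.log (1 + 1 / (2 * γ) ^ r) ^ r := by
        rw [youngLogPow, ← mul_assoc, hγc]
    _ ≤ Real.log (1 + 1 / (2 * γ) ^ r) ^ r := by
        apply mul_le_of_le_one_left (by positivity) (pow_le_one₀ (by norm_num) (by norm_num))
    _ ≤ ((r + 1) * Real.log (1 + 2 ^ (2 * n * r))) ^ r := by
        gcongr
        exact log_one_add_one_div_two_mul_gam_pow_le n r
    _ = (r + 1) ^ r * Real.log (1 + 2 ^ (2 * n * r)) ^ r := mul_pow _ _ _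

theorem orlicz_norm_of_test_function_general
    (d r : ℕ) (hrd : r ≤ d) :
    (∃ C > 0, ∀ γ : ℝ, 0 < γ → γ ≤ Real.pi →
      (∫ x in box d, |testFun d r γ x| * Real.log (1 + |testFun d r γ x|) ^ r) ≤
        C * γ ^ r * ((1 / (2 * γ) ^ r) * Real.log (1 + 1 / (2 * γ) ^ r) ^ r)) ∧
    (∃ C > 0, ∀ n : ℕ, 1 ≤ n →
      (2 : ℝ) ^ (2 * n * r) ≤
          (2 : ℝ) ^ (2 * n * r) * Real.log (1 + (2 : ℝ) ^ (2 * n * r)) ^ r →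
      luxNorm d (fun u => u * Real.log (1 + u) ^ r) (testFun d r (gam n)) ≤
        C * ((2 : ℝ) ^ (2 * n * r) * Real.log (1 + (2 : ℝ) ^ (2 * n * r)) ^ r) /
          (2 : ℝ) ^ (2 * n * r)) := by
  refine ⟨⟨(2 * π) ^ d, by positivity, fun γ hγ _ => integral_youngLogPow_testFun_le hrd hγ.le⟩,
    ⟨1 + (2 * π) ^ d * (r + 1) ^ r, by positivity, fun n _ hQN => ?_⟩⟩
  set N : ℝ := 2 ^ (2 * n * r)
  set L := Real.log (1 + N)
  have hN : 0 < N := by positivity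
  have hL : 1 ≤ L ^ r := (le_mul_iff_one_le_right hN).1 hQN
  calc luxNorm d (youngLogPow r) (testFun d r (gam n))
      ≤ 1 + ∫ x in box d, youngLogPow r |testFun d r (gam n) x| :=
        luxNorm_le_one_add_integral (fun _ => youngLogPow_nonneg r)
          (fun _ hu _ => youngLogPow_div_le r hu)
          (integrableOn_comp_abs_testFun (youngLogPow_zero r) d r _)
    _ ≤ 1 + (2 * π) ^ d * (gam n ^ r * youngLogPow r (1 / (2 * gam n) ^ r)) := by
        rw [← mul_assoc]
        gcongr
        exact integral_youngLogPow_testFun_le hrd (gam_pos n).le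
    _ ≤ 1 + (2 * π) ^ d * ((r + 1) ^ r * L ^ r) := by
        gcongr 1 + _ * ?_
        exact gam_pow_mul_youngLogPow_le n r
    _ ≤ (1 + (2 * π) ^ d * (r + 1) ^ r) * L ^ r := by nlinarith
    _ = (1 + (2 * π) ^ d * (r + 1) ^ r) * (N * L ^ r) / N := by field_simp

theorem orlicz_norm_of_test_function
    (d r : ℕ) (hr : 1 ≤ r) (hrd : r ≤ d) :
    (∃ C > 0, ∀ γ : ℝ, 0 < γ → γ ≤ Real.pi →
      (∫ x in box d, |testFun d r γ x| * Real.log (1 + |testFun d r γ x|) ^ r) ≤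
        C * γ ^ r * ((1 / (2 * γ) ^ r) * Real.log (1 + 1 / (2 * γ) ^ r) ^ r)) ∧
    (∃ C > 0, ∀ n : ℕ, 1 ≤ n →
      (2 : ℝ) ^ (2 * n * r) ≤
          (2 : ℝ) ^ (2 * n * r) * Real.log (1 + (2 : ℝ) ^ (2 * n * r)) ^ r →
      luxNorm d (fun u => u * Real.log (1 + u) ^ r) (testFun d r (gam n)) ≤
        C * ((2 : ℝ) ^ (2 * n * r) * Real.log (1 + (2 : ℝ) ^ (2 * n * r)) ^ r) /
          (2 : ℝ) ^ (2 * n * r)) :=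
  orlicz_norm_of_test_function_general d r hrd
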